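/- Covering the deeper cut-out domain (Lemma 4.8, second part): Let n ≥ 2 and let M ⊂ ℂⁿ be a good Morse boundary bounding Ω_M with critical radii 2 ≤ r̂₁ < ⋯ < r̂_κ, let δ > 0 be sufficiently small, and let η := c·δ²/r̂_κ with c ∈ (0,1) a constant depending only on n (so η ≪ δ). Then for all radii r, r' with r̂_{κ−1} < r ≤ r' − η and r' < r̂_κ, the union Ω_{>r'−η} ∪ V_δ(M_{>r})_{>r} is contained in Rind(R_{r'}, η) ∪ Ω_{>r'} ∪ V_δ(M_{>r})_{>r}. -/

import Mathlib

open Metric Set Topology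

noncomputable section

/-- `ℂⁿ` with the Euclidean norm. -/
abbrev Cn (n : ℕ) : Type := EuclideanSpace ℂ (Fin n)

variable {n : ℕ}

/-- `V_δ(E)`: the union of the open balls of radius `δ` centered at the points of `E`. -/
def Vnbhd (δ : ℝ) (E : Set (Cn n)) : Set (Cn n) := ⋃ p ∈ E, Metric.ball p δ

/-- The open exterior `{‖z‖ > r}` of the closed ball of radius `r`. -/
def cutGT (r : ℝ) : Set (Cn n) := {z : Cn n | r < ‖z‖}

/-- The rind of thickness `η` around a subset `R` of the sphere `{‖z‖ = r}`:
`Rind(R, η) = {(1+s)z : z ∈ R, |s| < η/r}`. -/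
def Rind (r η : ℝ) (R : Set (Cn n)) : Set (Cn n) :=
  {w : Cn n | ∃ z ∈ R, ∃ s : ℝ, |s| < η / r ∧ w = (1 + s) • z}

/-- `Shell_r^{r+δ}(A) := {‖z‖ > r} ∩ V_δ(A)`, a one-sided shell neighborhood of `A`. -/
def Shell (r δ : ℝ) (A : Set (Cn n)) : Set (Cn n) := cutGT r ∩ Vnbhd δ A

/-- `R` is a relatively open subset of the sphere `{‖z‖ = r}`. -/
def RelOpenInSphere (r : ℝ) (R : Set (Cn n)) : Prop :=
  R ⊆ Metric.sphere (0 : Cn n) r ∧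
    ∃ O : Set (Cn n), IsOpen O ∧ R = O ∩ Metric.sphere (0 : Cn n) r

/-- `M` is a `C^∞` embedded hypersurface of `ℂⁿ ≅ ℝ^{2n}`: near each of its points it is the
regular zero set of a `C^∞` real-valued defining function. -/
def IsSmoothHypersurface (M : Set (Cn n)) : Prop :=
  ∀ p ∈ M, ∃ (U : Set (Cn n)) (f : Cn n → ℝ),
    IsOpen U ∧ p ∈ U ∧ ContDiffOn ℝ (⊤ : ℕ∞) f U ∧
    (∀ z ∈ U, fderiv ℝ f z ≠ 0) ∧ M ∩ U = {z | z ∈ U ∧ f z = 0}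

/-- `N` is a `C^∞` embedded submanifold of `ℂⁿ ≅ ℝ^{2n}` of codimension `k` (without
boundary): near each of its points it is the regular zero set of a `C^∞` submersion
with values in `ℝᵏ`. -/
def IsSmoothSubmanifoldCodim (k : ℕ) (N : Set (Cn n)) : Prop :=
  ∀ p ∈ N, ∃ (U : Set (Cn n)) (f : Cn n → EuclideanSpace ℝ (Fin k)),
    IsOpen U ∧ p ∈ U ∧ ContDiffOn ℝ (⊤ : ℕ∞) f U ∧
    (∀ z ∈ U, Function.Surjective (fderiv ℝ f z)) ∧ N ∩ U = {z | z ∈ U ∧ f z = 0}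

/-- `p` is a critical point of the restriction to `M` of the distance function `r(z) = ‖z‖`:
the differential of the norm annihilates the tangent space of `M` at `p`. -/
def IsCriticalPtOfNorm (M : Set (Cn n)) (p : Cn n) : Prop :=
  p ∈ M ∧ ∀ v ∈ tangentConeAt ℝ M p, fderiv ℝ (fun z : Cn n => ‖z‖) p v = 0

/-- `p` is a nondegenerate (Morse) critical point of the restriction to the hypersurface `M`
of the distance function `r(z) = ‖z‖`: in some local `C^∞` parametrization `φ` of `M`
centered at `p` (an immersion whose image covers a neighborhood of `p` in `M`), the function
`x ↦ ‖φ x‖` has vanishing differential and nondegenerate Hessian at the origin. -/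
def IsMorseCriticalPtOfNorm (M : Set (Cn n)) (p : Cn n) : Prop :=
  ∃ (φ : EuclideanSpace ℝ (Fin (2 * n - 1)) → Cn n)
    (V : Set (EuclideanSpace ℝ (Fin (2 * n - 1)))),
    IsOpen V ∧ (0 : EuclideanSpace ℝ (Fin (2 * n - 1))) ∈ V ∧
    ContDiffOn ℝ (⊤ : ℕ∞) φ V ∧ φ 0 = p ∧
    Function.Injective (fderiv ℝ φ 0) ∧
    (∀ x ∈ V, φ x ∈ M) ∧
    (∃ U : Set (Cn n), IsOpen U ∧ p ∈ U ∧ M ∩ U ⊆ φ '' V) ∧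
    fderiv ℝ (fun x => ‖φ x‖) 0 = 0 ∧
    (∀ v, (∀ w, fderiv ℝ (fderiv ℝ (fun x => ‖φ x‖)) 0 v w = 0) → v = 0)

/-- `C` is a connected component of the set `S`. -/
def IsCCIn (S C : Set (Cn n)) : Prop := ∃ x ∈ S, C = connectedComponentIn S x

/-- `V_δ(M)` is a tubular neighborhood of `M`: it is diffeomorphic to `M × (-δ, δ)`,
the zero section corresponding to `M` itself. -/
def IsTubularNbhd (δ : ℝ) (M : Set (Cn n)) : Prop :=
  ∃ (Φ : Cn n × ℝ → Cn n) (Ψ : Cn n → Cn n × ℝ),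
    ContDiffOn ℝ (⊤ : ℕ∞) Φ (M ×ˢ Set.Ioo (-δ) δ) ∧
    ContDiffOn ℝ (⊤ : ℕ∞) Ψ (Vnbhd δ M) ∧
    Set.MapsTo Φ (M ×ˢ Set.Ioo (-δ) δ) (Vnbhd δ M) ∧
    Set.MapsTo Ψ (Vnbhd δ M) (M ×ˢ Set.Ioo (-δ) δ) ∧
    (∀ x ∈ M ×ˢ Set.Ioo (-δ) δ, Ψ (Φ x) = x) ∧
    (∀ z ∈ Vnbhd δ M, Φ (Ψ z) = z) ∧
    (∀ p ∈ M, Φ (p, 0) = p)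
/-- A good Morse boundary: a compact connected `C^∞` embedded hypersurface `M ⊆ ℂⁿ`
bounding a bounded domain `Ω` with `2 ≤ dist(0, cl Ω) ≤ 5`, such that the restriction of
`r(z) = ‖z‖` to `M` is a Morse function with finitely many nondegenerate critical points
`crit 0, …, crit (κ-1)` located on distinct sphere levels
`2 ≤ ‖crit 0‖ < ⋯ < ‖crit (κ-1)‖ ≤ 5 + diam (cl Ω)`. -/
structure GoodMorseBoundary (n : ℕ) where
  M : Set (Cn n)
  Ω : Set (Cn n)
  κ : ℕ
  crit : Fin κ → Cn n
  isOpen_Ω : IsOpen Ω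
  isConnected_Ω : IsConnected Ω
  isBounded_Ω : Bornology.IsBounded Ω
  frontier_Ω : frontier Ω = M
  isCompact_M : IsCompact M
  isConnected_M : IsConnected M
  smooth_M : IsSmoothHypersurface M
  dist_lb : 2 ≤ Metric.infDist (0 : Cn n) (closure Ω)
  dist_ub : Metric.infDist (0 : Cn n) (closure Ω) ≤ 5
  crit_isCrit : ∀ i, IsCriticalPtOfNorm M (crit i)
  crit_morse : ∀ i, IsMorseCriticalPtOfNorm M (crit i)
  radii_strictMono : StrictMono fun i => ‖crit i‖
  radii_lb : ∀ i, 2 ≤ ‖crit i‖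
  radii_ub : ∀ i, ‖crit i‖ ≤ 5 + Metric.diam (closure Ω)
  crit_complete : ∀ p, IsCriticalPtOfNorm M p → ∃ i, p = crit i

namespace GoodMorseBoundary

variable (B : GoodMorseBoundary n)

/-- The `i`-th critical sphere level `r̂ᵢ`. -/
def rhat (i : ℕ) (h : i < B.κ) : ℝ := ‖B.crit ⟨i, h⟩‖

/-- `M_{>r} = M ∩ {‖z‖ > r}`. -/
def Mgt (r : ℝ) : Set (Cn n) := B.M ∩ cutGT r

/-- `Ω_{>r} = Ω_M ∩ {‖z‖ > r}`. -/
def Ωgt (r : ℝ) : Set (Cn n) := B.Ω ∩ cutGT r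

/-- `V_δ(M_{>r})_{>r} = V_δ(M_{>r}) ∩ {‖z‖ > r}`. -/
def Vgt (δ r : ℝ) : Set (Cn n) := Vnbhd δ (B.Mgt r) ∩ cutGT r

/-- `R_{r'} = Ω_M ∩ {‖z‖ = r'}`. -/
def Rslice (r : ℝ) : Set (Cn n) := B.Ω ∩ Metric.sphere (0 : Cn n) r

/-- `N_{r'} = M ∩ {‖z‖ = r'}`. -/
def Nslice (r : ℝ) : Set (Cn n) := B.M ∩ Metric.sphere (0 : Cn n) r

end GoodMorseBoundary


lemma seg_frontier {E : Type*} [NormedAddCommGroup E] [NormedSpace ℝ E]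
    {Ω : Set E} (hΩ : IsOpen Ω) {z w : E} (hz : z ∈ Ω) (hw : w ∉ Ω) :
    ∃ t ∈ Icc (0:ℝ) 1, z + t • (w - z) ∈ frontier Ω := by
  set γ : ℝ → E := fun t => z + t • (w - z) with hγ
  have hcont : Continuous γ := by continuity
  set S : Set ℝ := Icc (0:ℝ) 1 ∩ γ ⁻¹' Ωᶜ with hS
  have hSc : IsClosed S := isClosed_Icc.inter (hΩ.isClosed_compl.preimage hcont)
  have hSne : S.Nonempty := ⟨1, ⟨zero_le_one, le_refl 1⟩, by simp [hγ, hw]⟩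
  have hSbdd : BddBelow S := ⟨0, fun t ht => ht.1.1⟩
  set t₀ := sInf S with ht₀
  have ht₀S : t₀ ∈ S := hSc.csInf_mem hSne hSbdd
  have ht₀pos : 0 < t₀ := by
    rcases ht₀S.1.1.lt_or_eq with h | h
    · exact h
    · exfalso; apply ht₀S.2; simp [hγ, ← h, hz]
  refine ⟨t₀, ht₀S.1, ?_, by simpa [hΩ.interior_eq] using ht₀S.2⟩
  have hev : ∀ᶠ t in 𝓝[<] t₀, γ t ∈ Ω := by
    filter_upwards [Ioo_mem_nhdsLT ht₀pos] with t ht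
    by_contra hmem
    exact absurd (csInf_le hSbdd ⟨⟨ht.1.le, ht.2.le.trans ht₀S.1.2⟩, hmem⟩) (not_le.2 ht.2)
  have htend : Filter.Tendsto γ (𝓝[<] t₀) (𝓝 (γ t₀)) :=
    (hcont.tendsto t₀).mono_left nhdsWithin_le_nhds
  exact mem_closure_of_tendsto htend hev

/-- **Covering the deeper cut-out domain (Lemma 4.8, second part).** Let `n ≥ 2`.  There
is a constant `c ∈ (0,1)` depending only on `n` such that for every good Morse boundary
`B` with critical radii `r̂₁ < ⋯ < r̂_κ` (`κ ≥ 2`) and every sufficiently small `δ > 0`,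
setting `η = c·δ²/r̂_κ`, for all radii `r, r'` with `r̂_{κ-1} < r ≤ r' - η` and
`r' < r̂_κ`, the union `Ω_{>r'-η} ∪ V_δ(M_{>r})_{>r}` is contained in
`Rind(R_{r'}, η) ∪ Ω_{>r'} ∪ V_δ(M_{>r})_{>r}`. -/
theorem deeper_domain_covered (n : ℕ) (hn : 2 ≤ n) :
    ∃ c : ℝ, 0 < c ∧ c < 1 ∧
      ∀ B : GoodMorseBoundary n, ∀ hκ : 2 ≤ B.κ,
        ∃ δ₁ : ℝ, 0 < δ₁ ∧
          ∀ δ : ℝ, 0 < δ → δ ≤ δ₁ →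
            ∀ r r' : ℝ,
              B.rhat (B.κ - 2) (by omega) < r →
              r ≤ r' - c * δ ^ 2 / B.rhat (B.κ - 1) (by omega) →
              r' < B.rhat (B.κ - 1) (by omega) →
              B.Ωgt (r' - c * δ ^ 2 / B.rhat (B.κ - 1) (by omega)) ∪ B.Vgt δ r
                ⊆ Rind r' (c * δ ^ 2 / B.rhat (B.κ - 1) (by omega)) (B.Rslice r')
                    ∪ B.Ωgt r' ∪ B.Vgt δ r := by
  refine ⟨1/2, by norm_num, by norm_num, ?_⟩
  intro B hκ
  refine ⟨1, one_pos, ?_⟩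
  intro δ hδ hδ1 r r' hr hrr' hr'
  set R := B.rhat (B.κ - 1) (by omega) with hRdef
  set η := 1/2 * δ ^ 2 / R with hηdef
  have hR2 : (2:ℝ) ≤ R := B.radii_lb _
  have hRpos : (0:ℝ) < R := by linarith
  have hηpos : 0 < η := by rw [hηdef]; positivity
  have hηδ : η < δ := by
    rw [hηdef, div_lt_iff₀ hRpos]
    nlinarith
  have hr2 : (2:ℝ) < r := lt_of_le_of_lt (B.radii_lb _) hr
  have hr'pos : (0:ℝ) < r' := by linarith
  intro z hz
  rcases hz with hz | hz
  · obtain ⟨hzΩ, hzr⟩ := hz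
    have hzr : r' - η < ‖z‖ := hzr
    rcases lt_or_ge r' ‖z‖ with hcase | hcase
    · exact Or.inl (Or.inr ⟨hzΩ, hcase⟩)
    · have hzpos : 0 < ‖z‖ := by linarith
      set w := (r' / ‖z‖) • z with hwdef
      have hwnorm : ‖w‖ = r' := by
        rw [hwdef, norm_smul, Real.norm_eq_abs, abs_of_pos (div_pos hr'pos hzpos)]
        field_simp
      by_cases hwΩ : w ∈ B.Ω
      · left; left
        refine ⟨w, ⟨hwΩ, mem_sphere_zero_iff_norm.2 hwnorm⟩, ‖z‖ / r' - 1, ?_, ?_⟩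
        · have habs : |‖z‖ / r' - 1| = (r' - ‖z‖) / r' := by
            rw [abs_of_nonpos (by rw [sub_nonpos, div_le_one hr'pos]; exact hcase)]
            field_simp; ring
          rw [habs, div_lt_div_iff_of_pos_right hr'pos]
          linarith
        · rw [hwdef, smul_smul]
          have : (1 + (‖z‖ / r' - 1)) * (r' / ‖z‖) = 1 := by field_simp; ring
          rw [this, one_smul]
      · obtain ⟨t, ht, hm⟩ := seg_frontier B.isOpen_Ω hzΩ hwΩ
        set m := z + t • (w - z) with hmdef
        have hmM : m ∈ B.M := B.frontier_Ω ▸ hm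
        have hwz : w - z = (r' / ‖z‖ - 1) • z := by
          rw [hwdef, sub_smul, one_smul]
        have ha : 0 ≤ r' / ‖z‖ - 1 := by
          rw [sub_nonneg, le_div_iff₀ hzpos]; linarith
        have hmz : m - z = (t * (r' / ‖z‖ - 1)) • z := by
          rw [hmdef, add_sub_cancel_left, hwz, smul_smul]
        have hsub : (r' / ‖z‖ - 1) * ‖z‖ = r' - ‖z‖ := by field_simp
        have hdist : dist z m < δ := by
          rw [dist_comm, dist_eq_norm, hmz, norm_smul, Real.norm_eq_abs,
            abs_of_nonneg (mul_nonneg ht.1 ha)]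
          have h1 : t * (r' / ‖z‖ - 1) * ‖z‖ ≤ (r' / ‖z‖ - 1) * ‖z‖ :=
            mul_le_mul_of_nonneg_right (mul_le_of_le_one_left ha ht.2) (norm_nonneg z)
          rw [hsub] at h1
          linarith
        have hta : (0:ℝ) ≤ t * (r' / ‖z‖ - 1) := mul_nonneg ht.1 ha
        have hmnorm : ‖z‖ ≤ ‖m‖ := by
          have hm2 : m = (1 + t * (r' / ‖z‖ - 1)) • z := by
            rw [hmdef, hwz, smul_smul, add_smul, one_smul]
          rw [hm2, norm_smul, Real.norm_eq_abs,
            abs_of_nonneg (by linarith : (0:ℝ) ≤ 1 + t * (r' / ‖z‖ - 1)),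
            add_mul, one_mul]
          have := mul_nonneg hta (norm_nonneg z)
          linarith
        right
        refine ⟨?_, ?_⟩
        · show z ∈ Vnbhd δ (B.Mgt r)
          exact Set.mem_biUnion (⟨hmM, show r < ‖m‖ by linarith⟩ : m ∈ B.Mgt r)
            (Metric.mem_ball.2 hdist)
        · show r < ‖z‖
          linarith
  · exact Or.inr hz
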